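/- arXiv:1708.08440 — 2 statements merged into one kernel-verified Lean document; each statement's English description precedes it below -/
import Mathlib

section
/- For every c > 0, every x > 0 and every Borel set B ⊆ (0,∞), with λ := c²/2, the conditional distribution of the absorbed drifted Brownian motion converges to ν: lim_{t→∞} ( ∫_B p_t(x,y) dy ) / ( ∫_0^∞ p_t(x,y) dy ) = ν(B), where ν is the probability measure on (0,∞) with density 2λ y e^{−c y} dy. -/
/-!
Completing the squares, `p_t(x, y)` is a factor independent of `y` times
`h_t(y) = (t / x) sinh (x y / t) e^{-c y} e^{-y² / (2t)}`, and that factor cancels in the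
conditional distribution. As `t → ∞`, `h_t(y) → y e^{-c y}`, and for `t ≥ 2x / c` the bound
`sinh u ≤ u eᵘ` dominates `h_t(y)` by `y e^{-c y / 2}` on `(0, ∞)`. Dominated convergence in
numerator and denominator gives the limit `(∫_B y e^{-c y} dy) / (1 / c²) = ν(B)`.
-/

open Real MeasureTheory Filter
open Set Topology

lemma Real.sinh_le_mul_exp (u : ℝ) : sinh u ≤ u * exp u := by
  have h : exp u * (1 - 2 * u) ≤ exp (-u) := by
    calc exp u * (1 - 2 * u) ≤ exp u * exp (-(2 * u)) := by
          gcongr; linarith [add_one_le_exp (-(2 * u))]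
      _ = exp (-u) := by rw [← exp_add]; ring_nf
  rw [sinh_eq]
  linarith

lemma tendsto_mul_sinh_div_atTop (a : ℝ) :
    Tendsto (fun t : ℝ => t * sinh (a / t)) atTop (𝓝 a) := by
  rcases eq_or_ne a 0 with rfl | ha
  · simp
  have hslope : Tendsto (fun s : ℝ => s⁻¹ * sinh s) (𝓝[≠] 0) (𝓝 1) := by
    simpa using (hasDerivAt_sinh 0).tendsto_slope_zero
  have hs : Tendsto (fun t : ℝ => a / t) atTop (𝓝[≠] 0) :=
    tendsto_nhdsWithin_of_tendsto_nhds_of_eventually_within _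
      (tendsto_const_nhds.div_atTop tendsto_id)
      (eventually_gt_atTop 0 |>.mono fun t ht => div_ne_zero ha ht.ne')
  have := (hslope.comp hs).const_mul a
  rw [mul_one] at this
  refine this.congr' ((eventually_gt_atTop 0).mono fun t ht => ?_)
  simp only [Function.comp_apply]
  field_simp

lemma integrableOn_Ioi_mul_exp_neg_mul {b : ℝ} (hb : 0 < b) :
    IntegrableOn (fun y : ℝ => y * exp (-(b * y))) (Ioi 0) := by
  simpa using integrableOn_rpow_mul_exp_neg_mul_rpow (p := 1) (s := 1) (by norm_num) one_pos hb

lemma integral_Ioi_mul_exp_neg_mul {b : ℝ} (hb : 0 < b) :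
    ∫ y in Ioi (0 : ℝ), y * exp (-(b * y)) = 1 / b ^ 2 := by
  have h := integral_rpow_mul_exp_neg_mul_Ioi two_pos hb
  norm_num at h
  simpa using h

noncomputable def absorbedDensity (c x t y : ℝ) : ℝ :=
  exp (-(c * (y - x)) - c ^ 2 / 2 * t) * (√(2 * π * t))⁻¹ *
    (exp (-(x - y) ^ 2 / (2 * t)) - exp (-(x + y) ^ 2 / (2 * t)))

noncomputable def rescaledDensity (c x t y : ℝ) : ℝ :=
  t / x * sinh (x * y / t) * exp (-(c * y)) * exp (-y ^ 2 / (2 * t))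

lemma absorbedDensity_eq_mul_rescaledDensity {c x t : ℝ} (hx : x ≠ 0) (ht : t ≠ 0) (y : ℝ) :
    absorbedDensity c x t y =
      2 * x / t * exp (c * x - c ^ 2 / 2 * t - x ^ 2 / (2 * t)) / √(2 * π * t) *
        rescaledDensity c x t y := by
  have hsplit : ∀ s : ℝ, s ^ 2 = 1 → exp (-(x - s * y) ^ 2 / (2 * t)) =
      exp (s * (x * y / t)) * exp (-x ^ 2 / (2 * t)) * exp (-y ^ 2 / (2 * t)) := fun s hs => by
    rw [← exp_add, ← exp_add]; congr 1; field_simp; linear_combination (-y ^ 2) * hs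
  have hdrift : exp (-(c * (y - x)) - c ^ 2 / 2 * t) =
      exp (c * x - c ^ 2 / 2 * t - x ^ 2 / (2 * t)) * exp (x ^ 2 / (2 * t)) * exp (-(c * y)) := by
    rw [← exp_add, ← exp_add]; ring_nf
  have h1 := hsplit 1 (by norm_num)
  have h2 := hsplit (-1) (by norm_num)
  simp only [one_mul, sub_neg_eq_add, neg_mul] at h1 h2
  rw [absorbedDensity, rescaledDensity, h1, h2, hdrift, sinh_eq]
  field_simp
  rw [← exp_add, add_neg_cancel, exp_zero, one_mul]

lemma tendsto_rescaledDensity (c : ℝ) {x : ℝ} (hx : x ≠ 0) (y : ℝ) :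
    Tendsto (fun t => rescaledDensity c x t y) atTop (𝓝 (y * exp (-(c * y)))) := by
  have hsinh : Tendsto (fun t => t / x * sinh (x * y / t)) atTop (𝓝 y) := by
    have := (tendsto_mul_sinh_div_atTop (x * y)).div_const x
    rw [mul_div_cancel_left₀ y hx] at this
    exact this.congr fun t => by ring
  have hgauss : Tendsto (fun t => exp (-y ^ 2 / (2 * t))) atTop (𝓝 1) := by
    have := (tendsto_const_nhds (x := -y ^ 2)).div_atTop (tendsto_id.const_mul_atTop two_pos)
    simpa [Function.comp_def] using (continuous_exp.tendsto 0).comp this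
  have := (hsinh.mul_const (exp (-(c * y)))).mul hgauss
  rw [mul_one] at this
  exact this

lemma abs_rescaledDensity_le {c x t y : ℝ} (hc : 0 < c) (hx : 0 < x) (ht : 2 * x / c ≤ t)
    (hy : 0 ≤ y) : |rescaledDensity c x t y| ≤ y * exp (-(c / 2 * y)) := by
  have ht0 : 0 < t := (by positivity : 0 < 2 * x / c).trans_le ht
  set u := x * y / t with hu
  have hu0 : 0 ≤ u := by positivity
  have hu_le : u ≤ c / 2 * y := by
    rw [hu, div_le_iff₀ ht0]
    rw [div_le_iff₀ hc] at ht
    nlinarith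
  have hgauss : exp (-y ^ 2 / (2 * t)) ≤ 1 := by
    rw [exp_le_one_iff]; apply div_nonpos_of_nonpos_of_nonneg <;> nlinarith
  have hnonneg : 0 ≤ rescaledDensity c x t y := by
    unfold rescaledDensity
    have := sinh_nonneg_iff.2 hu0
    positivity
  rw [abs_of_nonneg hnonneg]
  calc rescaledDensity c x t y ≤ t / x * (u * exp u) * exp (-(c * y)) * 1 := by
        unfold rescaledDensity
        gcongr
        exact sinh_le_mul_exp u
    _ = y * exp (u - c * y) := by
        rw [hu, sub_eq_add_neg, exp_add]; field_simp
    _ ≤ y * exp (-(c / 2 * y)) := by gcongr; linarith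

lemma tendsto_setIntegral_rescaledDensity {c x : ℝ} (hc : 0 < c) (hx : 0 < x) {B : Set ℝ}
    (hB : B ⊆ Ioi 0) :
    Tendsto (fun t => ∫ y in B, rescaledDensity c x t y) atTop
      (𝓝 (∫ y in B, y * exp (-(c * y)))) := by
  refine tendsto_integral_filter_of_dominated_convergence (fun y => y * exp (-(c / 2 * y)))
    (Eventually.of_forall fun t => by unfold rescaledDensity; fun_prop) ?_
    ((integrableOn_Ioi_mul_exp_neg_mul (half_pos hc)).mono_set hB)
    (Eventually.of_forall fun y => tendsto_rescaledDensity c hx.ne' y)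
  filter_upwards [eventually_ge_atTop (2 * x / c)] with t ht
  refine ae_restrict_of_ae_restrict_of_subset hB ?_
  filter_upwards [self_mem_ae_restrict measurableSet_Ioi] with y hy
  exact abs_rescaledDensity_le hc hx ht (le_of_lt hy)

lemma setIntegral_absorbedDensity_div_eq {c x t : ℝ} (hx : 0 < x) (ht : 0 < t) (B : Set ℝ) :
    (∫ y in B, absorbedDensity c x t y) / ∫ y in Ioi 0, absorbedDensity c x t y =
      (∫ y in B, rescaledDensity c x t y) / ∫ y in Ioi 0, rescaledDensity c x t y := by
  have hK : 2 * x / t * exp (c * x - c ^ 2 / 2 * t - x ^ 2 / (2 * t)) / √(2 * π * t) ≠ 0 := by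
    have : 0 < √(2 * π * t) := by positivity
    positivity
  simp only [absorbedDensity_eq_mul_rescaledDensity hx.ne' ht.ne', integral_const_mul]
  exact mul_div_mul_left _ _ hK

theorem conditional_distribution_tendsto_qsd_general
    (c x : ℝ) (hc : 0 < c) (hx : 0 < x)
    (B : Set ℝ) (hB0 : B ⊆ Set.Ioi (0 : ℝ)) :
    Tendsto
      (fun t : ℝ =>
        (∫ y in B,
            Real.exp (-(c * (y - x)) - c ^ 2 / 2 * t) * (Real.sqrt (2 * π * t))⁻¹ *
              (Real.exp (-(x - y) ^ 2 / (2 * t)) - Real.exp (-(x + y) ^ 2 / (2 * t)))) /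
        (∫ y in Set.Ioi (0 : ℝ),
            Real.exp (-(c * (y - x)) - c ^ 2 / 2 * t) * (Real.sqrt (2 * π * t))⁻¹ *
              (Real.exp (-(x - y) ^ 2 / (2 * t)) - Real.exp (-(x + y) ^ 2 / (2 * t)))))
      atTop
      (nhds (∫ y in B, 2 * (c ^ 2 / 2) * y * Real.exp (-(c * y)))) := by
  have hlimit : (∫ y in B, y * exp (-(c * y))) / (1 / c ^ 2) =
      ∫ y in B, 2 * (c ^ 2 / 2) * y * exp (-(c * y)) := by
    simp only [mul_assoc, integral_const_mul]
    rw [one_div, div_inv_eq_mul]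
    ring
  have hratio := (tendsto_setIntegral_rescaledDensity hc hx hB0).div
    (tendsto_setIntegral_rescaledDensity hc hx subset_rfl) (by
      rw [integral_Ioi_mul_exp_neg_mul hc]; positivity)
  rw [integral_Ioi_mul_exp_neg_mul hc, hlimit] at hratio
  refine hratio.congr' ?_
  filter_upwards [eventually_gt_atTop 0] with t ht
  exact (setIntegral_absorbedDensity_div_eq hx ht B).symm

theorem conditional_distribution_tendsto_qsd
    (c x : ℝ) (hc : 0 < c) (hx : 0 < x)
    (B : Set ℝ) (hB : MeasurableSet B) (hB0 : B ⊆ Set.Ioi (0 : ℝ)) :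
    Tendsto
      (fun t : ℝ =>
        (∫ y in B,
            Real.exp (-(c * (y - x)) - c ^ 2 / 2 * t) * (Real.sqrt (2 * π * t))⁻¹ *
              (Real.exp (-(x - y) ^ 2 / (2 * t)) - Real.exp (-(x + y) ^ 2 / (2 * t)))) /
        (∫ y in Set.Ioi (0 : ℝ),
            Real.exp (-(c * (y - x)) - c ^ 2 / 2 * t) * (Real.sqrt (2 * π * t))⁻¹ *
              (Real.exp (-(x - y) ^ 2 / (2 * t)) - Real.exp (-(x + y) ^ 2 / (2 * t)))))
      atTop
      (nhds (∫ y in B, 2 * (c ^ 2 / 2) * y * Real.exp (-(c * y)))) :=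
  conditional_distribution_tendsto_qsd_general c x hc hx B hB0
end

section
/- For every c > 0, t > 0 and y > 0, with λ := c²/2, one has ∫_0^∞ 2λ x e^{−c x} p_t(x,y) dx = e^{−λ t} · 2λ y e^{−c y}. That is, the measure ν with density 2λ x e^{−c x} on (0,∞) is a left eigenmeasure of the absorbed drifted Brownian semigroup with eigenvalue e^{−λ t}. -/
/-!
Since `e^{-cx} · e^{-c(y-x)} = e^{-cy}`, the drift factors out of the integral, leaving
`2λ e^{-cy - λt} ∫₀^∞ x (g_t(x - y) - g_t(x + y)) dx` with `g_t` the centred Gaussian density of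
variance `t`. By the method of images, the substitution `x ↦ -x` carries the second term onto the
negative half-line, so the integral is the mean `y` of the Gaussian `N(y, t)`.
-/

open Real MeasureTheory Set ProbabilityTheory
open scoped NNReal

lemma integral_Ioi_zero_add_comp_neg {E : Type*} [NormedAddCommGroup E] [NormedSpace ℝ E]
    {f : ℝ → E} (hf : Integrable f) :
    ∫ x in Ioi (0 : ℝ), (f x + f (-x)) = ∫ x, f x := by
  rw [integral_add hf.integrableOn hf.comp_neg.integrableOn, integral_comp_neg_Ioi, neg_zero,
    add_comm, intervalIntegral.integral_Iic_add_Ioi hf.integrableOn hf.integrableOn]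

namespace ProbabilityTheory

variable {μ : ℝ} {v : ℝ≥0}

lemma gaussianPDFReal_comp_neg (x : ℝ) :
    gaussianPDFReal μ v (-x) = gaussianPDFReal (-μ) v x := by
  simp only [gaussianPDFReal]
  ring_nf

lemma integrable_mul_gaussianPDFReal (hv : v ≠ 0) :
    Integrable (fun x ↦ x * gaussianPDFReal μ v x) := by
  have h := (memLp_id_gaussianReal (μ := μ) (v := v) 1).integrable le_rfl
  rw [gaussianReal_of_var_ne_zero μ hv,
    integrable_withDensity_iff_integrable_smul' (measurable_gaussianPDF μ v)
      (ae_of_all _ fun _ ↦ gaussianPDF_lt_top)] at h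
  simpa [toReal_gaussianPDF, mul_comm] using h

lemma integral_mul_gaussianPDFReal (hv : v ≠ 0) :
    ∫ x, x * gaussianPDFReal μ v x = μ := by
  simpa [integral_gaussianReal_eq_integral_smul hv, mul_comm] using
    integral_id_gaussianReal (μ := μ) (v := v)

lemma integral_Ioi_mul_gaussianPDFReal_sub_gaussianPDFReal_neg (hv : v ≠ 0) :
    ∫ x in Ioi (0 : ℝ), x * (gaussianPDFReal μ v x - gaussianPDFReal (-μ) v x) = μ := by
  have hreflect : ∀ x : ℝ, x * (gaussianPDFReal μ v x - gaussianPDFReal (-μ) v x)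
      = x * gaussianPDFReal μ v x + -x * gaussianPDFReal μ v (-x) := by
    intro x
    rw [gaussianPDFReal_comp_neg]
    ring
  simp_rw [hreflect]
  rw [integral_Ioi_zero_add_comp_neg (f := fun x ↦ x * gaussianPDFReal μ v x)
    (integrable_mul_gaussianPDFReal hv), integral_mul_gaussianPDFReal hv]

end ProbabilityTheory

theorem nu_is_left_eigenmeasure_general
    (c t y : ℝ) (ht : 0 < t) :
    (∫ x in Set.Ioi (0 : ℝ),
        2 * (c ^ 2 / 2) * x * Real.exp (-(c * x)) *
          (Real.exp (-(c * (y - x)) - c ^ 2 / 2 * t) * (Real.sqrt (2 * π * t))⁻¹ *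
            (Real.exp (-(x - y) ^ 2 / (2 * t)) - Real.exp (-(x + y) ^ 2 / (2 * t)))))
      = Real.exp (-(c ^ 2 / 2) * t) * (2 * (c ^ 2 / 2) * y * Real.exp (-(c * y))) := by
  set v : ℝ≥0 := ⟨t, ht.le⟩
  have hv : v ≠ 0 := ne_of_gt ht
  have hvt : (v : ℝ) = t := rfl
  have hdrift : ∀ x : ℝ, Real.exp (-(c * x)) * Real.exp (-(c * (y - x)) - c ^ 2 / 2 * t)
      = Real.exp (-(c ^ 2 / 2) * t) * Real.exp (-(c * y)) := by
    intro x
    rw [← Real.exp_add, ← Real.exp_add]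
    ring_nf
  have hintegrand : ∀ x : ℝ,
      2 * (c ^ 2 / 2) * x * Real.exp (-(c * x)) *
          (Real.exp (-(c * (y - x)) - c ^ 2 / 2 * t) * (Real.sqrt (2 * π * t))⁻¹ *
            (Real.exp (-(x - y) ^ 2 / (2 * t)) - Real.exp (-(x + y) ^ 2 / (2 * t))))
        = 2 * (c ^ 2 / 2) * Real.exp (-(c ^ 2 / 2) * t) * Real.exp (-(c * y)) *
          (x * (gaussianPDFReal y v x - gaussianPDFReal (-y) v x)) := by
    intro x
    simp only [gaussianPDFReal, sub_neg_eq_add, hvt]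
    linear_combination 2 * (c ^ 2 / 2) * x * (Real.sqrt (2 * π * t))⁻¹ *
      (Real.exp (-(x - y) ^ 2 / (2 * t)) - Real.exp (-(x + y) ^ 2 / (2 * t))) * hdrift x
  simp_rw [hintegrand]
  rw [integral_const_mul, integral_Ioi_mul_gaussianPDFReal_sub_gaussianPDFReal_neg hv]
  ring

theorem nu_is_left_eigenmeasure
    (c t y : ℝ) (hc : 0 < c) (ht : 0 < t) (hy : 0 < y) :
    (∫ x in Set.Ioi (0 : ℝ),
        2 * (c ^ 2 / 2) * x * Real.exp (-(c * x)) *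
          (Real.exp (-(c * (y - x)) - c ^ 2 / 2 * t) * (Real.sqrt (2 * π * t))⁻¹ *
            (Real.exp (-(x - y) ^ 2 / (2 * t)) - Real.exp (-(x + y) ^ 2 / (2 * t)))))
      = Real.exp (-(c ^ 2 / 2) * t) * (2 * (c ^ 2 / 2) * y * Real.exp (-(c * y))) :=
  nu_is_left_eigenmeasure_general c t y ht
end
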